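/- Stochastic Bit-Lifting Channels (Proposition 'lifting_channels'): Let B, B↑ ∈ ℕ₊, let W ∈ ℝ^{B↑×2B}, and let 𝐗^{↑:W} be the stochastic bit-lifting channel whose i-th coordinate at input x ∈ {0,1}^B has law Σ_{j=1}^B SM_{2B}(W_{i:})_j δ_{x_j} + Σ_{j=1}^B SM_{2B}(W_{i:})_{j+B} δ_{¬x_j}. Then (1) 𝐗^{↑:W}(x) ∈ {0,1}^{B↑} ℙ-almost surely for every x ∈ {0,1}^B; and (2) if W is a binary matrix with exactly one nonzero entry per row then for every 0 < δ ≤ 1 there exists η > 0 such that, with probability at least 1 − δ, simultaneously for every i ∈ [B]₊: the number of indices j ∈ [B↑]₊ with 𝐗^{↑:ηW}_j = x_i equals ‖W_{:i}‖₀ and the number of indices j ∈ [B↑]₊ with 𝐗^{↑:ηW}_j = ¬x_i equals ‖W_{:i+B}‖₀. -/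

import Mathlib

/-!
Every literal value lies in `{0, 1}`, so the law of each coordinate is carried by `{0, 1}`.
If the rows of `W` are one-hot, `W_j = e_{σ j}`, then in the law of coordinate `j` of the channel
with weights `η • W` every literal other than `σ j` has softmax weight at most `exp (-η)`.
A union bound over the `Bup * 2 ^ B` pairs (coordinate, input) shows that, outside an event of
probability at most `Bup * 2 ^ B * 2B * exp (-η)`, which is `≤ δ` for large `η`, coordinate `j`
is the literal `σ j` of the input for every input simultaneously. On that event coordinate `j`
is `x_i` (resp. `¬x_i`) as a function of `x` exactly when `σ j = i` (resp. `σ j = i + B`),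
i.e. when `W j i ≠ 0` (resp. `W j (i + B) ≠ 0`).
-/

open MeasureTheory ProbabilityTheory

/-- Softmax on `ℝ^n`. -/
noncomputable def softmax {n : ℕ} (w : Fin n → ℝ) : Fin n → ℝ :=
  fun i => Real.exp (w i) / ∑ j, Real.exp (w j)

/-- The (real) value of the `j`-th literal at input `x ∈ {0,1}^B`: `x_j` for
`j < B` and `¬x_{j-B} = 1 − x_{j-B}` for `j ≥ B`. -/
def litVal {B : ℕ} (x : Fin B → Bool) (j : Fin (2 * B)) : ℝ :=
  if h : j.val < B then (cond (x ⟨j.val, h⟩) 1 0 : ℝ)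
  else 1 - (cond (x ⟨j.val - B, by have := j.isLt; omega⟩) 1 0 : ℝ)

/-- The law `Σ_{j=1}^B SM_{2B}(W_i)_j δ_{x_j} + Σ_{j=1}^B SM_{2B}(W_i)_{j+B} δ_{¬x_j}`
of the `i`-th coordinate of the stochastic bit-lifting channel with weights `W`
at input `x`. -/
noncomputable def liftCoordLaw {B Bup : ℕ} (W : Fin Bup → Fin (2 * B) → ℝ)
    (x : Fin B → Bool) (i : Fin Bup) : Measure ℝ :=
  ∑ j : Fin (2 * B), ENNReal.ofReal (softmax (W i) j) • Measure.dirac (litVal x j)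

section Softmax

variable {n : ℕ}

lemma softmax_nonneg (w : Fin n → ℝ) (k : Fin n) : 0 ≤ softmax w k := by
  unfold softmax; positivity

lemma sum_softmax [NeZero n] (w : Fin n → ℝ) : ∑ k, softmax w k = 1 := by
  simp only [softmax, ← Finset.sum_div]
  exact div_self (Finset.sum_pos (fun _ _ => Real.exp_pos _) Finset.univ_nonempty).ne'

lemma softmax_le_exp_sub (w : Fin n → ℝ) (k m : Fin n) :
    softmax w k ≤ Real.exp (w k - w m) := by
  rw [softmax, Real.exp_sub]
  gcongr
  exact Finset.single_le_sum (fun j _ => (Real.exp_pos (w j)).le) (Finset.mem_univ m)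

lemma softmax_smul_single_le {k m : Fin n} (hkm : k ≠ m) (η : ℝ) :
    softmax (η • Pi.single m 1) k ≤ Real.exp (-η) := by
  have := softmax_le_exp_sub (η • Pi.single m 1) k m
  rw [Pi.smul_apply, Pi.smul_apply, Pi.single_eq_of_ne hkm, Pi.single_eq_same] at this
  simpa using this

end Softmax

lemma exists_pos_mul_exp_neg_le (c : ℝ) {δ : ℝ} (hδ : 0 < δ) :
    ∃ η, 0 < η ∧ c * Real.exp (-η) ≤ δ := by
  have hlim : Filter.Tendsto (fun η => c * Real.exp (-η)) Filter.atTop (nhds 0) := by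
    simpa using Real.tendsto_exp_neg_atTop_nhds_zero.const_mul c
  exact ((Filter.eventually_gt_atTop 0).and (hlim.eventually (ge_mem_nhds hδ))).exists

lemma ofReal_one_sub_le_measure_compl {Ω : Type*} [MeasurableSpace Ω] {μ : Measure Ω}
    [IsProbabilityMeasure μ] {s : Set Ω} {δ : ℝ} (hδ : 0 ≤ δ)
    (hs : μ s ≤ ENNReal.ofReal δ) :
    ENNReal.ofReal (1 - δ) ≤ μ sᶜ := by
  rw [ENNReal.ofReal_sub _ hδ, ENNReal.ofReal_one, tsub_le_iff_right]
  calc 1 = μ Set.univ := measure_univ.symm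
    _ ≤ μ s + μ sᶜ := measure_univ_le_add_compl s
    _ ≤ μ sᶜ + ENNReal.ofReal δ := by rw [add_comm]; gcongr

section Literals

variable {B : ℕ}

lemma litVal_eq_zero_or_eq_one (x : Fin B → Bool) (k : Fin (2 * B)) :
    litVal x k = 0 ∨ litVal x k = 1 := by
  unfold litVal
  split <;> cases x _ <;> simp

lemma forall_litVal_eq_iff (i : Fin B) (k : Fin (2 * B)) :
    (∀ x : Fin B → Bool, litVal x k = (cond (x i) 1 0 : ℝ)) ↔ k.val = i.val := by
  refine ⟨fun h => ?_, fun h x => ?_⟩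
  · by_cases hk : k.val < B
    · by_contra hne
      simpa [litVal, hk, Fin.ext_iff, hne] using h fun m => decide (m = i)
    · simpa [litVal, hk] using h fun _ => false
  · rw [litVal, dif_pos (h ▸ i.isLt)]
    congr

lemma forall_litVal_eq_not_iff (i : Fin B) (k : Fin (2 * B)) :
    (∀ x : Fin B → Bool, litVal x k = 1 - (cond (x i) 1 0 : ℝ)) ↔ k.val = i.val + B := by
  refine ⟨fun h => ?_, fun h x => ?_⟩
  · by_cases hk : k.val < B
    · simpa [litVal, hk] using h fun _ => false
    · by_contra hne
      have : k.val - B ≠ i.val := by omega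
      simpa [litVal, hk, Fin.ext_iff, this] using h fun m => decide (m = i)
  · rw [litVal, dif_neg (by omega)]
    congr
    omega

end Literals

section Law

variable {B Bup : ℕ} (W : Fin Bup → Fin (2 * B) → ℝ) (x : Fin B → Bool) (i : Fin Bup)

lemma liftCoordLaw_apply (s : Set ℝ) :
    liftCoordLaw W x i s =
      ∑ k, ENNReal.ofReal (softmax (W i) k) * s.indicator 1 (litVal x k) := by
  simp [liftCoordLaw, Measure.dirac_apply]

instance [NeZero B] : IsProbabilityMeasure (liftCoordLaw W x i) := by
  constructor
  simp only [liftCoordLaw_apply, Set.indicator_univ, Pi.one_apply, mul_one]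
  rw [← ENNReal.ofReal_sum_of_nonneg fun k _ => softmax_nonneg _ k, sum_softmax,
    ENNReal.ofReal_one]

lemma ae_liftCoordLaw_eq_zero_or_eq_one : ∀ᵐ t ∂liftCoordLaw W x i, t = 0 ∨ t = 1 := by
  rw [ae_iff, liftCoordLaw_apply]
  refine Finset.sum_eq_zero fun k _ => ?_
  rw [Set.indicator_of_notMem (not_not.2 (litVal_eq_zero_or_eq_one x k)), mul_zero]

lemma liftCoordLaw_compl_singleton_le {m : Fin (2 * B)} {ε : ℝ}
    (hε : ∀ k ≠ m, softmax (W i) k ≤ ε) :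
    liftCoordLaw W x i {litVal x m}ᶜ ≤ (2 * B : ℕ) * ENNReal.ofReal ε := by
  rw [liftCoordLaw_apply]
  calc _ ≤ ∑ _k : Fin (2 * B), ENNReal.ofReal ε := by
        refine Finset.sum_le_sum fun k _ => ?_
        obtain rfl | hk := eq_or_ne k m
        · simp
        · exact mul_le_of_le_of_le_one (ENNReal.ofReal_le_ofReal (hε k hk))
            (Set.indicator_apply_le' (fun _ => le_rfl) fun _ => zero_le_one)
    _ = _ := by simp

end Law

lemma aemeasurable_of_map_eq {α β : Type*} [MeasurableSpace α] [MeasurableSpace β]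
    {μ : Measure α} {ν : Measure β} [IsProbabilityMeasure ν] {f : α → β} (h : μ.map f = ν) :
    AEMeasurable f μ :=
  AEMeasurable.of_map_ne_zero (h ▸ IsProbabilityMeasure.ne_zero ν)

lemma measure_exists_ne_litVal_le {Ω : Type*} [MeasurableSpace Ω] {μ : Measure Ω} {B Bup : ℕ}
    [NeZero B] {V : Fin Bup → Fin (2 * B) → ℝ} {Y : Ω → (Fin B → Bool) → Fin Bup → ℝ}
    (hY : ∀ x j, μ.map (fun ω => Y ω x j) = liftCoordLaw V x j) (σ : Fin Bup → Fin (2 * B))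
    {ε : ℝ} (hε : ∀ j, ∀ k ≠ σ j, softmax (V j) k ≤ ε) :
    μ {ω | ∃ j x, Y ω x j ≠ litVal x (σ j)} ≤
      (Bup * 2 ^ B * (2 * B) : ℕ) * ENNReal.ofReal ε := by
  have hcoord (j : Fin Bup) (x : Fin B → Bool) :
      μ {ω | Y ω x j ≠ litVal x (σ j)} ≤ (2 * B : ℕ) * ENNReal.ofReal ε := by
    calc μ {ω | Y ω x j ≠ litVal x (σ j)}
        = μ.map (fun ω => Y ω x j) {litVal x (σ j)}ᶜ :=
          (Measure.map_apply_of_aemeasurable (aemeasurable_of_map_eq (hY x j))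
            (measurableSet_singleton _).compl).symm
      _ ≤ _ := hY x j ▸ liftCoordLaw_compl_singleton_le V x j (hε j)
  calc μ {ω | ∃ j x, Y ω x j ≠ litVal x (σ j)}
      = μ (⋃ j, ⋃ x, {ω | Y ω x j ≠ litVal x (σ j)}) := by simp only [Set.ofPred_exists]
    _ ≤ ∑ j, ∑ x, μ {ω | Y ω x j ≠ litVal x (σ j)} :=
      (measure_iUnion_fintype_le _ _).trans
        (Finset.sum_le_sum fun j _ => measure_iUnion_fintype_le _ _)
    _ ≤ ∑ _j : Fin Bup, ∑ _x : Fin B → Bool, (2 * B : ℕ) * ENNReal.ofReal ε := by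
      gcongr with j _ x _
      exact hcoord j x
    _ = _ := by
      simp only [Finset.sum_const, Finset.card_univ, Fintype.card_pi, Fintype.card_bool,
        Finset.prod_const, Fintype.card_fin, nsmul_eq_mul, Nat.cast_mul, Nat.cast_pow,
        Nat.cast_ofNat]
      ring

section OneHot

variable {B Bup : ℕ} {W : Fin Bup → Fin (2 * B) → ℝ} {σ : Fin Bup → Fin (2 * B)}

lemma filter_forall_litVal_eq (hσ : ∀ j k, W j k ≠ 0 ↔ k = σ j) (i : Fin B) :
    Finset.univ.filter (fun j => ∀ x : Fin B → Bool, litVal x (σ j) = (cond (x i) 1 0 : ℝ)) =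
      Finset.univ.filter (fun j => W j ⟨i.val, by omega⟩ ≠ 0) := by
  simp [forall_litVal_eq_iff, hσ, Fin.ext_iff, eq_comm]

lemma filter_forall_litVal_eq_not (hσ : ∀ j k, W j k ≠ 0 ↔ k = σ j) (i : Fin B) :
    Finset.univ.filter
        (fun j => ∀ x : Fin B → Bool, litVal x (σ j) = 1 - (cond (x i) 1 0 : ℝ)) =
      Finset.univ.filter (fun j => W j ⟨i.val + B, by omega⟩ ≠ 0) := by
  simp [forall_litVal_eq_not_iff, hσ, Fin.ext_iff, eq_comm]

end OneHot

/-- **Stochastic Bit-Lifting Channels.** Let `W ∈ ℝ^{B↑×2B}` and, for each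
temperature `η`, let `X η` be a stochastic bit-lifting channel whose `i`-th
coordinate at input `x` has the prescribed mixture law for the weights `η • W`.
Then:
(1) for every `η` and every `x`, almost surely `X η (·) x ∈ {0,1}^{B↑}`; and
(2) if `W` is binary with exactly one nonzero entry per row, then for every
`0 < δ ≤ 1` there is `η > 0` such that with probability at least `1 − δ`,
simultaneously for every `i`, the number of coordinates of the channel equal
(as functions of the input) to the literal `x_i` is `‖W_{:i}‖₀` and the number
equal to `¬x_i` is `‖W_{:(i+B)}‖₀`. -/
theorem lifting_channels
    {Ω : Type*} [MeasureSpace Ω] [IsProbabilityMeasure (ℙ : Measure Ω)]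
    (B Bup : ℕ) (hB : 0 < B)
    (W : Fin Bup → Fin (2 * B) → ℝ)
    (X : ℝ → Ω → (Fin B → Bool) → Fin Bup → ℝ)
    (hlaw : ∀ (η : ℝ) (x : Fin B → Bool) (i : Fin Bup),
      Measure.map (fun ω => X η ω x i) ℙ = liftCoordLaw (η • W) x i) :
    (∀ (η : ℝ) (x : Fin B → Bool),
      ∀ᵐ ω ∂ℙ, ∀ i : Fin Bup, X η ω x i = 0 ∨ X η ω x i = 1) ∧
    ((∀ i j, W i j = 0 ∨ W i j = 1) → (∀ i, ∃! j, W i j ≠ 0) →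
      ∀ δ : ℝ, 0 < δ → δ ≤ 1 → ∃ η : ℝ, 0 < η ∧
        ENNReal.ofReal (1 - δ) ≤
          ℙ {ω | ∀ i : Fin B,
            (Finset.univ.filter fun j : Fin Bup =>
              ∀ x : Fin B → Bool, X η ω x j = (cond (x i) 1 0 : ℝ)).card
              = (Finset.univ.filter fun j : Fin Bup =>
                  W j ⟨i.val, by have := i.isLt; omega⟩ ≠ 0).card ∧
            (Finset.univ.filter fun j : Fin Bup =>
              ∀ x : Fin B → Bool, X η ω x j = 1 - (cond (x i) 1 0 : ℝ)).card
              = (Finset.univ.filter fun j : Fin Bup =>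
                  W j ⟨i.val + B, by have := i.isLt; omega⟩ ≠ 0).card}) := by
  have : NeZero B := ⟨hB.ne'⟩
  refine ⟨fun η x => ae_all_iff.2 fun i => ?_, fun hbin huniq δ hδ _ => ?_⟩
  · exact ae_of_ae_map (aemeasurable_of_map_eq (hlaw η x i))
      ((hlaw η x i).symm ▸ ae_liftCoordLaw_eq_zero_or_eq_one _ x i)
  choose σ hσ hσ_unique using huniq
  have hW : ∀ j k, W j k ≠ 0 ↔ k = σ j := fun j k =>
    ⟨hσ_unique j k, fun h => h ▸ hσ j⟩
  have hrow : ∀ j, W j = Pi.single (σ j) 1 := fun j => funext fun k => by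
    obtain rfl | hk := eq_or_ne k (σ j)
    · simpa using (hbin j _).resolve_left (hσ j)
    · simpa [hk] using mt (hW j k).1 hk
  obtain ⟨η, hη, hηδ⟩ := exists_pos_mul_exp_neg_le (Bup * 2 ^ B * (2 * B) : ℕ) hδ
  refine ⟨η, hη, ?_⟩
  have hbad := measure_exists_ne_litVal_le (hlaw η) σ (ε := Real.exp (-η)) fun j k hk => by
    simpa [hrow] using softmax_smul_single_le hk η
  refine (ofReal_one_sub_le_measure_compl hδ.le (hbad.trans ?_)).trans
    (measure_mono fun ω hω i => ?_)
  · rw [← ENNReal.ofReal_natCast, ← ENNReal.ofReal_mul (Nat.cast_nonneg _)]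
    exact ENNReal.ofReal_le_ofReal hηδ
  · simp only [Set.mem_compl_iff, Set.mem_ofPred_eq, not_exists, not_not] at hω
    simp only [hω, filter_forall_litVal_eq hW, filter_forall_litVal_eq_not hW, and_self]
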